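/- (Quantitative lower bound in the counterexample.) In the setting of the Rademacher sequence (ε_i)_{i∈Z}, define Z_n(ε) = 1{ε_{−2n} = −1}·1{ε_{−2n+1} = −1}·1{ε_{−2n+2} = 1}⋯1{ε_{−1} = 1}·ε_0 for n ≥ 1 (for n = 1, Z_1(ε) = 1{ε_{−2} = −1}1{ε_{−1} = −1}ε_0), and let f = Σ_{n≥1} c_n Z_n(ε) for real numbers (c_n) with Σ_{n≥1} c_n² ‖Z_n(ε)‖₂² < ∞ (so f ∈ L², F_0-measurable, E(f | F_{−1}) = 0). Then for every i ≤ −1, writing i = −(2k−1) or i = −2k with k ∈ N, the physical dependence measure satisfies δ_i(f)² ≥ (1/2) Σ_{j≥k} c_j² ‖Z_j(ε)‖₂², and consequently Σ_{i≤−1} δ_i(f)² ≥ Σ_{j≥1} j · c_j² ‖Z_j(ε)‖₂². -/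

import Mathlib

open MeasureTheory ProbabilityTheory Filter
open scoped ENNReal NNReal

noncomputable section

/-- The σ-algebra `F_k = σ(ε_j : j ≤ k)` on `{−1,1}^ℤ ⊆ ℝ^ℤ`. -/
def radF (k : ℤ) : MeasurableSpace (ℤ → ℝ) :=
  ⨆ j : ℤ, ⨆ _ : j ≤ k, MeasurableSpace.comap (fun ω => ω j) inferInstance

/-- The coordinates of `P` are i.i.d. Rademacher: `P(ε_i = 1) = P(ε_i = −1) = 1/2`. -/
def IsRademacherMeasure (P : Measure (ℤ → ℝ)) : Prop :=
  IsProbabilityMeasure P ∧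
    iIndepFun (fun i ω => ω i : ℤ → (ℤ → ℝ) → ℝ) P ∧
    ∀ i : ℤ, P.map (fun ω => ω i)
      = (2⁻¹ : ℝ≥0∞) • Measure.dirac (1 : ℝ) + (2⁻¹ : ℝ≥0∞) • Measure.dirac (-1 : ℝ)

/-- The physical dependence measure `δ_i(f) = ‖f(ε) − f(ε^{*i})‖₂`, computed on the enlarged
space `Ω × Ω` carrying `(ε, ε^*)` with law `P ⊗ P`; `ε^{*i}` is `ε` with coordinate `i`
replaced by `ε_i^*`. -/
def physDelta (P : Measure (ℤ → ℝ)) (i : ℤ) (f : (ℤ → ℝ) → ℝ) : ℝ≥0∞ :=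
  eLpNorm (fun p : (ℤ → ℝ) × (ℤ → ℝ) => f p.1 - f (Function.update p.1 i (p.2 i))) 2
    (P.prod P)


/-- `Z_n(ε) = 1{ε_{−2n} = −1} 1{ε_{−2n+1} = −1} 1{ε_{−2n+2} = 1} ⋯ 1{ε_{−1} = 1} ε_0`. -/
def radZ (n : ℕ) : (ℤ → ℝ) → ℝ := fun ω =>
  (if ω (-(2 * (n : ℤ))) = -1 then 1 else 0) * (if ω (-(2 * (n : ℤ)) + 1) = -1 then 1 else 0)
    * (∏ j ∈ Finset.Icc (-(2 * (n : ℤ)) + 2) (-1), if ω j = 1 then (1 : ℝ) else 0) * ω 0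

end

/-! The patterns `−1, −1, 1, …, 1` of the `Z_n` on the coordinates `−2n, …, −1` exclude each
other, so at every `ε` at most one `Z_j` is nonzero. If `i ∈ {−2k, −2k+1}` and the pattern of some
`Z_j` with `j ≥ k` occurs in `ε`, changing `ε_i` destroys it without creating another one: then
`f(ε) = c_j Z_j(ε)` and `f(ε^{*i}) = 0`. Since `ε_i^*` differs from `ε_i` with probability at
least `1/2` whatever `ε` is, `δ_i(f)² ≥ ½ ∑_{j≥k} c_j² ‖Z_j‖₂²`. Each `k` accounts for two
indices `i`, and summing the tails `∑_{j≥k}` over `k ≥ 1` counts the `j`-th term `j` times. -/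

lemma measurable_radZ (n : ℕ) : Measurable (radZ n) := by
  have hind : ∀ t a, Measurable fun ω : ℤ → ℝ => if ω t = a then (1 : ℝ) else 0 := fun t a =>
    Measurable.ite (measurableSet_eq_fun (measurable_pi_apply t) measurable_const) measurable_const
      measurable_const
  unfold radZ
  fun_prop

def RadPattern (n : ℕ) (ω : ℤ → ℝ) : Prop :=
  ω (-(2 * (n : ℤ))) = -1 ∧ ω (-(2 * (n : ℤ)) + 1) = -1 ∧
    ∀ t ∈ Finset.Icc (-(2 * (n : ℤ)) + 2) (-1), ω t = 1

lemma radZ_eq_zero_of_not_radPattern {n : ℕ} {ω : ℤ → ℝ} (h : ¬ RadPattern n ω) :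
    radZ n ω = 0 := by
  simp only [RadPattern, not_and_or, not_forall] at h
  rcases h with h | h | ⟨t, ht, h⟩
  · simp [radZ, h]
  · simp [radZ, h]
  · have hprod : (∏ t ∈ Finset.Icc (-(2 * (n : ℤ)) + 2) (-1),
        if ω t = 1 then (1 : ℝ) else 0) = 0 := Finset.prod_eq_zero ht (if_neg h)
    rw [radZ, hprod]
    ring

lemma radPattern_inj {m n : ℕ} {ω : ℤ → ℝ} (hm : 1 ≤ m) (hn : 1 ≤ n) (hωm : RadPattern m ω)
    (hωn : RadPattern n ω) : m = n := by
  by_contra hmn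
  wlog hlt : m < n generalizing m n
  · exact this hn hm hωn hωm (Ne.symm hmn) (by omega)
  have := hωn.2.2 (-(2 * (m : ℤ))) (by rw [Finset.mem_Icc]; omega)
  rw [hωm.1] at this
  norm_num at this

lemma not_radPattern_update {k j m : ℕ} {i : ℤ} {ω : ℤ → ℝ} {b : ℝ} (hk : 1 ≤ k) (hkj : k ≤ j)
    (hm : 1 ≤ m) (hi : i = -(2 * (k : ℤ) - 1) ∨ i = -(2 * (k : ℤ))) (hω : RadPattern j ω)
    (hb : b ≠ ω i) : ¬ RadPattern m (Function.update ω i b) := by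
  replace hi : i = -(2 * (k : ℤ)) + 1 ∨ i = -(2 * (k : ℤ)) := by omega
  obtain ⟨h1, h2, h3⟩ := hω
  rintro ⟨g1, g2, g3⟩
  have hupd_ne : ∀ t, t ≠ i → Function.update ω i b t = ω t := fun t ht => Function.update_of_ne ht _ _
  have hupd_i : Function.update ω i b i = b := Function.update_self _ _ _
  -- For `m ≠ j`, one of the two `−1` coordinates of the shorter pattern is not `i` and sits in the
  -- `1`-block of the longer one; for `m = j` the coordinate `i` itself is pinned by both patterns.
  rcases lt_trichotomy m j with hlt | rfl | hgt
  · by_cases hmi : i = -(2 * (m : ℤ))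
    · have := h3 (-(2 * (m : ℤ)) + 1) (by rw [Finset.mem_Icc]; omega)
      rw [hupd_ne _ (by omega), this] at g2
      norm_num at g2
    · have := h3 (-(2 * (m : ℤ))) (by rw [Finset.mem_Icc]; omega)
      rw [hupd_ne _ (Ne.symm hmi), this] at g1
      norm_num at g1
  · rcases eq_or_lt_of_le hkj with rfl | hkm
    · rcases hi with rfl | rfl
      · rw [hupd_i] at g2
        exact hb (g2.trans h2.symm)
      · rw [hupd_i] at g1
        exact hb (g1.trans h1.symm)
    · have hmem : i ∈ Finset.Icc (-(2 * (m : ℤ)) + 2) (-1) := by rw [Finset.mem_Icc]; omega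
      have := g3 i hmem
      rw [hupd_i] at this
      exact hb (this.trans (h3 i hmem).symm)
  · by_cases hji : i = -(2 * (j : ℤ))
    · have := g3 (-(2 * (j : ℤ)) + 1) (by rw [Finset.mem_Icc]; omega)
      rw [hupd_ne _ (by omega), h2] at this
      norm_num at this
    · have := g3 (-(2 * (j : ℤ))) (by rw [Finset.mem_Icc]; omega)
      rw [hupd_ne _ (Ne.symm hji), h1] at this
      norm_num at this

lemma tsum_radZ_of_radPattern (c : ℕ → ℝ) {j : ℕ} {ω : ℤ → ℝ} (hj : 1 ≤ j)
    (hω : RadPattern j ω) : ∑' n : ℕ, c (n + 1) * radZ (n + 1) ω = c j * radZ j ω := by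
  have hother (n : ℕ) (hn : n ≠ j - 1) : c (n + 1) * radZ (n + 1) ω = 0 := by
    have hnω : ¬ RadPattern (n + 1) ω := fun h => by
      have := radPattern_inj (Nat.le_add_left 1 n) hj h hω
      omega
    rw [radZ_eq_zero_of_not_radPattern hnω, mul_zero]
  rw [tsum_eq_single (j - 1) hother, Nat.sub_add_cancel hj]

lemma tsum_radZ_eq_zero (c : ℕ → ℝ) {ω : ℤ → ℝ} (h : ∀ m, 1 ≤ m → ¬ RadPattern m ω) :
    ∑' n : ℕ, c (n + 1) * radZ (n + 1) ω = 0 := by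
  simp [radZ_eq_zero_of_not_radPattern (h _ (Nat.le_add_left 1 _))]

lemma enorm_sq_eq_ofReal_sq (x : ℝ) : ‖x‖ₑ ^ 2 = ENNReal.ofReal (x ^ 2) := by
  rw [Real.enorm_eq_ofReal_abs, ← ENNReal.ofReal_pow (abs_nonneg x), sq_abs]

lemma tsum_sq_radZ_le_enorm_sub_update_sq (c : ℕ → ℝ) {f : (ℤ → ℝ) → ℝ}
    (hf : ∀ ω, f ω = ∑' n : ℕ, c (n + 1) * radZ (n + 1) ω) {k : ℕ} (hk : 1 ≤ k) {i : ℤ}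
    (hi : i = -(2 * (k : ℤ) - 1) ∨ i = -(2 * (k : ℤ))) {ω : ℤ → ℝ} {b : ℝ} (hb : b ≠ ω i) :
    ∑' j : {j : ℕ // k ≤ j}, ENNReal.ofReal (c j ^ 2) * ‖radZ j ω‖ₑ ^ 2
      ≤ ‖f ω - f (Function.update ω i b)‖ₑ ^ 2 := by
  by_cases h : ∃ j, k ≤ j ∧ RadPattern j ω
  · obtain ⟨j, hkj, hω⟩ := h
    have hj : 1 ≤ j := hk.trans hkj
    have hother (j' : {j : ℕ // k ≤ j}) (hj' : j' ≠ ⟨j, hkj⟩) :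
        ENNReal.ofReal (c j' ^ 2) * ‖radZ j' ω‖ₑ ^ 2 = 0 := by
      have hj'ω : ¬ RadPattern j' ω := fun h =>
        hj' (Subtype.ext (radPattern_inj (hk.trans j'.2) hj h hω))
      rw [radZ_eq_zero_of_not_radPattern hj'ω, enorm_zero, zero_pow two_ne_zero, mul_zero]
    rw [tsum_eq_single ⟨j, hkj⟩ hother, hf, hf, tsum_radZ_of_radPattern c hj hω,
      tsum_radZ_eq_zero c fun m hm => not_radPattern_update hk hkj hm hi hω hb, sub_zero,
      enorm_mul, mul_pow, enorm_sq_eq_ofReal_sq (c j)]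
  · push Not at h
    rw [ENNReal.tsum_eq_zero.mpr fun j => by rw [radZ_eq_zero_of_not_radPattern (h j j.2)]; simp]
    exact zero_le

lemma eLpNorm_two_sq {α E : Type*} [MeasurableSpace α] [NormedAddCommGroup E] (g : α → E)
    (μ : Measure α) : eLpNorm g 2 μ ^ 2 = ∫⁻ x, ‖g x‖ₑ ^ 2 ∂μ := by
  simpa using eLpNorm_nnreal_pow_eq_lintegral (f := g) (μ := μ) (p := 2) two_ne_zero

lemma half_le_rademacher_measure_compl_singleton (a : ℝ) :
    2⁻¹ ≤ ((2⁻¹ : ℝ≥0∞) • Measure.dirac (1 : ℝ) + (2⁻¹ : ℝ≥0∞) • Measure.dirac (-1 : ℝ)) {a}ᶜ := by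
  have hs : MeasurableSet ({a}ᶜ : Set ℝ) := (measurableSet_singleton a).compl
  simp only [Measure.add_apply, Measure.smul_apply, Measure.dirac_apply' _ hs, smul_eq_mul]
  by_cases ha : a = 1
  · subst ha
    norm_num [Set.indicator_apply]
  · simp [Set.indicator_apply, Ne.symm ha]

lemma half_le_measure_coord_ne {P : Measure (ℤ → ℝ)} {i : ℤ}
    (hlaw : P.map (fun ω => ω i)
      = (2⁻¹ : ℝ≥0∞) • Measure.dirac (1 : ℝ) + (2⁻¹ : ℝ≥0∞) • Measure.dirac (-1 : ℝ))
    (a : ℝ) : 2⁻¹ ≤ P {ω | ω i ≠ a} := by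
  have := half_le_rademacher_measure_compl_singleton a
  rwa [← hlaw, Measure.map_apply (measurable_pi_apply i) (measurableSet_singleton a).compl] at this

theorem half_tsum_le_physDelta_sq {P : Measure (ℤ → ℝ)} [SFinite P] {i : ℤ}
    (hlaw : P.map (fun ω => ω i)
      = (2⁻¹ : ℝ≥0∞) • Measure.dirac (1 : ℝ) + (2⁻¹ : ℝ≥0∞) • Measure.dirac (-1 : ℝ))
    (c : ℕ → ℝ) {f : (ℤ → ℝ) → ℝ} (hf : ∀ ω, f ω = ∑' n : ℕ, c (n + 1) * radZ (n + 1) ω)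
    {k : ℕ} (hk : 1 ≤ k) (hi : i = -(2 * (k : ℤ) - 1) ∨ i = -(2 * (k : ℤ))) :
    2⁻¹ * (∑' j : {j : ℕ // k ≤ j}, ENNReal.ofReal (c j ^ 2) * eLpNorm (radZ j) 2 P ^ 2)
      ≤ physDelta P i f ^ 2 := by
  set S : (ℤ → ℝ) → ℝ≥0∞ :=
    fun ω => ∑' j : {j : ℕ // k ≤ j}, ENNReal.ofReal (c j ^ 2) * ‖radZ j ω‖ₑ ^ 2
  have hterm (j : ℕ) : Measurable fun ω => ENNReal.ofReal (c j ^ 2) * ‖radZ j ω‖ₑ ^ 2 :=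
    ((measurable_radZ j).enorm.pow_const 2).const_mul _
  have hS : Measurable S := Measurable.tsum fun j => hterm j
  have hflip : MeasurableSet {p : (ℤ → ℝ) × (ℤ → ℝ) | p.2 i ≠ p.1 i} :=
    (measurableSet_eq_fun ((measurable_pi_apply i).comp measurable_snd)
      ((measurable_pi_apply i).comp measurable_fst)).compl
  have hint : ∫⁻ ω, S ω ∂P
      = ∑' j : {j : ℕ // k ≤ j}, ENNReal.ofReal (c j ^ 2) * eLpNorm (radZ j) 2 P ^ 2 := by
    refine (lintegral_tsum fun j : {j : ℕ // k ≤ j} => (hterm j).aemeasurable).trans ?_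
    refine tsum_congr fun j => ?_
    rw [lintegral_const_mul _ ((measurable_radZ j).enorm.pow_const 2), eLpNorm_two_sq]
  have hg : Measurable ({p : (ℤ → ℝ) × (ℤ → ℝ) | p.2 i ≠ p.1 i}.indicator fun p => S p.1) :=
    (hS.comp measurable_fst).indicator hflip
  calc 2⁻¹ * (∑' j : {j : ℕ // k ≤ j}, ENNReal.ofReal (c j ^ 2) * eLpNorm (radZ j) 2 P ^ 2)
      = ∫⁻ ω, S ω * 2⁻¹ ∂P := by rw [lintegral_mul_const _ hS, hint, mul_comm]
    _ ≤ ∫⁻ ω, S ω * P {ω' | ω' i ≠ ω i} ∂P :=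
        lintegral_mono fun ω => by gcongr; exact half_le_measure_coord_ne hlaw (ω i)
    _ = ∫⁻ p, {p | p.2 i ≠ p.1 i}.indicator (fun p => S p.1) p ∂P.prod P := by
        rw [lintegral_prod _ hg.aemeasurable]
        congr 1 with ω
        exact (lintegral_indicator_const
          (measurableSet_eq_fun (measurable_pi_apply i) measurable_const).compl _).symm
    _ ≤ ∫⁻ p, ‖f p.1 - f (Function.update p.1 i (p.2 i))‖ₑ ^ 2 ∂P.prod P :=
        lintegral_mono fun p => Set.indicator_apply_le'
          (fun hp => tsum_sq_radZ_le_enorm_sub_update_sq c hf hk hi hp) fun _ => zero_le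
    _ = physDelta P i f ^ 2 := (eLpNorm_two_sq _ _).symm

lemma tsum_tsum_ge_eq_tsum_mul (a : ℕ → ℝ≥0∞) :
    ∑' m : ℕ, ∑' j : {j : ℕ // m + 1 ≤ j}, a j = ∑' j : ℕ, j * a j := by
  calc ∑' m : ℕ, ∑' j : {j : ℕ // m + 1 ≤ j}, a j
      = ∑' m : ℕ, ∑' j : ℕ, {j | m + 1 ≤ j}.indicator a j :=
        tsum_congr fun m => tsum_subtype {j | m + 1 ≤ j} a
    _ = ∑' j : ℕ, ∑' m : ℕ, {j | m + 1 ≤ j}.indicator a j := ENNReal.tsum_comm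
    _ = ∑' j : ℕ, j * a j := tsum_congr fun j => by
        rw [tsum_eq_sum (s := Finset.range j) fun m hm => Set.indicator_of_notMem
          (by simpa using hm) _]
        rw [Finset.sum_congr rfl fun m hm => Set.indicator_of_mem
          (show j ∈ {j | m + 1 ≤ j} from Finset.mem_range.mp hm) a]
        simp

lemma tsum_pair_le_tsum_neg (g : ℤ → ℝ≥0∞) :
    ∑' m : ℕ, (g (-(2 * (m : ℤ) + 1)) + g (-(2 * (m : ℤ) + 2)))
      ≤ ∑' i : {i : ℤ // i ≤ -1}, g i := by
  let e : ℕ × Fin 2 → {i : ℤ // i ≤ -1} := fun p => ⟨-(2 * (p.1 : ℤ) + 1) - (p.2 : ℕ), by omega⟩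
  have he : Function.Injective e := by
    rintro ⟨m, r⟩ ⟨m', r'⟩ h
    simp only [e, Subtype.mk.injEq] at h
    have := r.isLt; have := r'.isLt
    ext <;> simp only <;> omega
  calc ∑' m : ℕ, (g (-(2 * (m : ℤ) + 1)) + g (-(2 * (m : ℤ) + 2)))
      = ∑' m : ℕ, ∑' r : Fin 2, g (e (m, r)) := tsum_congr fun m => by
        rw [tsum_fintype, Fin.sum_univ_two]
        simp only [e, Fin.val_zero, Fin.val_one]
        congr 2
    _ = ∑' p : ℕ × Fin 2, g (e p) := (ENNReal.tsum_prod' (f := fun p => g (e p))).symm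
    _ ≤ ∑' i : {i : ℤ // i ≤ -1}, g i := ENNReal.tsum_comp_le_tsum_of_injective he fun i => g i

theorem statement18_general
    (P : Measure (ℤ → ℝ)) (hP : IsRademacherMeasure P)
    (c : ℕ → ℝ)
    (f : (ℤ → ℝ) → ℝ) (hf : ∀ ω, f ω = ∑' n : ℕ, c (n + 1) * radZ (n + 1) ω) :
    (∀ k : ℕ, 1 ≤ k → ∀ i : ℤ, (i = -(2 * (k : ℤ) - 1) ∨ i = -(2 * (k : ℤ))) →
        2⁻¹ * (∑' j : {j : ℕ // k ≤ j}, ENNReal.ofReal (c j ^ 2) * eLpNorm (radZ j) 2 P ^ 2)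
          ≤ physDelta P i f ^ 2) ∧
      (∑' j : ℕ, ((j : ℝ≥0∞) + 1) * ENNReal.ofReal (c (j + 1) ^ 2)
            * eLpNorm (radZ (j + 1)) 2 P ^ 2)
        ≤ ∑' i : {i : ℤ // i ≤ -1}, physDelta P i f ^ 2 := by
  obtain ⟨hprob, -, hlaw⟩ := hP
  have hδ := fun k hk i hi => half_tsum_le_physDelta_sq (hlaw i) c hf (k := k) hk hi
  refine ⟨hδ, ?_⟩
  set a : ℕ → ℝ≥0∞ := fun j => ENNReal.ofReal (c j ^ 2) * eLpNorm (radZ j) 2 P ^ 2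
  set S : ℕ → ℝ≥0∞ := fun k => ∑' j : {j : ℕ // k ≤ j}, a j
  calc ∑' j : ℕ, ((j : ℝ≥0∞) + 1) * ENNReal.ofReal (c (j + 1) ^ 2)
          * eLpNorm (radZ (j + 1)) 2 P ^ 2
      = ∑' j : ℕ, j * a j := by
        rw [tsum_eq_zero_add' (f := fun j : ℕ => (j : ℝ≥0∞) * a j) ENNReal.summable]
        simp only [a, Nat.cast_zero, zero_mul, zero_add, Nat.cast_succ, mul_assoc]
    _ = ∑' m : ℕ, S (m + 1) := (tsum_tsum_ge_eq_tsum_mul a).symm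
    _ = ∑' m : ℕ, (2⁻¹ * S (m + 1) + 2⁻¹ * S (m + 1)) :=
        tsum_congr fun m => by rw [← add_mul, ENNReal.inv_two_add_inv_two, one_mul]
    _ ≤ ∑' m : ℕ, (physDelta P (-(2 * (m : ℤ) + 1)) f ^ 2
          + physDelta P (-(2 * (m : ℤ) + 2)) f ^ 2) :=
        ENNReal.tsum_le_tsum fun m => add_le_add (hδ (m + 1) (by omega) _ (by push_cast; omega))
          (hδ (m + 1) (by omega) _ (by push_cast; omega))
    _ ≤ ∑' i : {i : ℤ // i ≤ -1}, physDelta P i f ^ 2 := 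
          tsum_pair_le_tsum_neg fun i => physDelta P i f ^ 2

/-- (Quantitative lower bound in the counterexample.) For i.i.d. Rademacher
coordinates, let `f = ∑_{n≥1} c_n Z_n` with `∑_{n≥1} c_n² ‖Z_n‖₂² < ∞`. Then for every
`i ≤ −1`, written as `i = −(2k−1)` or `i = −2k` with `k ≥ 1`,
`δ_i(f)² ≥ (1/2) ∑_{j≥k} c_j² ‖Z_j‖₂²`, and consequently
`∑_{i≤−1} δ_i(f)² ≥ ∑_{j≥1} j c_j² ‖Z_j‖₂²`. -/
theorem statement18
    (P : Measure (ℤ → ℝ)) (hP : IsRademacherMeasure P)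
    (c : ℕ → ℝ)
    (hc : (∑' n : ℕ, ENNReal.ofReal (c (n + 1) ^ 2) * eLpNorm (radZ (n + 1)) 2 P ^ 2) < ⊤)
    (f : (ℤ → ℝ) → ℝ) (hf : ∀ ω, f ω = ∑' n : ℕ, c (n + 1) * radZ (n + 1) ω) :
    (∀ k : ℕ, 1 ≤ k → ∀ i : ℤ, (i = -(2 * (k : ℤ) - 1) ∨ i = -(2 * (k : ℤ))) →
        2⁻¹ * (∑' j : {j : ℕ // k ≤ j}, ENNReal.ofReal (c j ^ 2) * eLpNorm (radZ j) 2 P ^ 2)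
          ≤ physDelta P i f ^ 2) ∧
      (∑' j : ℕ, ((j : ℝ≥0∞) + 1) * ENNReal.ofReal (c (j + 1) ^ 2)
            * eLpNorm (radZ (j + 1)) 2 P ^ 2)
        ≤ ∑' i : {i : ℤ // i ≤ -1}, physDelta P i f ^ 2 :=
  statement18_general P hP c f hf
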